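/- If strings x and y satisfy edit distance at most k, and x is partitioned into k+1 consecutive pieces, then at least one piece occurs as a (contiguous) substring of y. -/

import Mathlib

/-- Costs of edit operations (as in the former `Mathlib.Data.List.EditDistance.Defs`). -/
structure Levenshtein.Cost (α β δ : Type*) where
  delete : α → δ
  insert : β → δ
  substitute : α → β → δ

/-- The default cost: unit deletions and insertions, substitutions cost 0 if equal else 1. -/
def Levenshtein.defaultCost {α : Type*} [DecidableEq α] : Levenshtein.Cost α α ℕ where
  delete _ := 1
  insert _ := 1
  substitute a b := if a = b then 0 else 1

/-- Levenshtein distance, by the recursion the removed Mathlib definition satisfied. -/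
def levenshtein {α β δ : Type*} [AddZeroClass δ] [Min δ] (C : Levenshtein.Cost α β δ) :
    List α → List β → δ
  | [], [] => 0
  | [], y :: ys => C.insert y + levenshtein C [] ys
  | x :: xs, [] => C.delete x + levenshtein C xs []
  | x :: xs, y :: ys =>
    min (C.delete x + levenshtein C xs (y :: ys))
      (min (C.insert y + levenshtein C (x :: xs) ys) (C.substitute x y + levenshtein C xs ys))

/-!
Every edit operation touches at most one piece, so one of the `k + 1` pieces survives intact.
The induction follows the recursion of `levenshtein` with a strengthened claim: if the
distance from `h ++ t.flatten` to `y` is at most `t.length`, then `h` is a prefix of `y` or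
some piece of `t` is an infix of `y`. A free match strips a common first letter from `h` and
`y`; an edit of cost one is paid for by merging the first piece of `t` into `h`, and a merged
piece that is a prefix of a suffix of `y` makes the swallowed piece an infix of `y`.
-/

open List

theorem List.length_le_length_flatten_of_nil_notMem {α : Type*} {L : List (List α)}
    (hL : [] ∉ L) : L.length ≤ L.flatten.length := by
  rw [length_flatten, ← length_map (f := length)]
  refine length_le_sum_of_one_le _ fun n hn => ?_
  obtain ⟨l, hl, rfl⟩ := mem_map.mp hn
  exact length_pos_iff.mpr (ne_of_mem_of_not_mem hl hL)

theorem exists_infix_of_append_prefix_or {α : Type*} {h q y z : List α}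
    {t : List (List α)} (hzy : z <:+: y) (H : h ++ q <+: z ∨ ∃ r ∈ t, r <:+: z) :
    ∃ r ∈ q :: t, r <:+: y := by
  rcases H with ⟨s, rfl⟩ | ⟨r, hr, hrz⟩
  · exact ⟨q, mem_cons_self, (infix_append h q s).trans hzy⟩
  · exact ⟨r, mem_cons_of_mem q hr, hrz.trans hzy⟩

section

variable {α : Type*} [DecidableEq α]

theorem levenshtein_defaultCost_nil_right (x : List α) :
    levenshtein Levenshtein.defaultCost x [] = x.length := by
  induction x with
  | nil => rw [levenshtein, length_nil]
  | cons a x ih => rw [levenshtein, ih, length_cons, add_comm]; rfl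

theorem levenshtein_defaultCost_cons_cons_le {a b : α} {x y : List α} {k : ℕ}
    (hed : levenshtein Levenshtein.defaultCost (a :: x) (b :: y) ≤ k) :
    a = b ∧ levenshtein Levenshtein.defaultCost x y ≤ k ∨
      levenshtein Levenshtein.defaultCost x (b :: y) + 1 ≤ k ∨
      levenshtein Levenshtein.defaultCost (a :: x) y + 1 ≤ k ∨
      levenshtein Levenshtein.defaultCost x y + 1 ≤ k := by
  rw [levenshtein] at hed
  change min (1 + _) (min (1 + _) ((if a = b then 0 else 1) + _)) ≤ k at hed
  by_cases hab : a = b <;>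
    simp only [hab, ↓reduceIte, min_le_iff, true_and, false_and, false_or] at hed ⊢ <;> omega

theorem prefix_or_exists_infix_of_levenshtein_le :
    ∀ (h : List α) (t : List (List α)) (y : List α),
      levenshtein Levenshtein.defaultCost (h ++ t.flatten) y ≤ t.length →
      h <+: y ∨ ∃ p ∈ t, p <:+: y
  | [], _, _, _ => .inl nil_prefix
  | a :: p, t, [], hed => by
    refine .inr ⟨[], by_contra fun ht => ?_, nil_infix⟩
    have := length_le_length_flatten_of_nil_notMem ht
    rw [levenshtein_defaultCost_nil_right] at hed
    simp only [cons_append, length_cons, length_append] at hed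
    omega
  | a :: p, t, b :: y, hed => by
    rw [cons_append] at hed
    rcases levenshtein_defaultCost_cons_cons_le hed with ⟨rfl, hmatch⟩ | hedit | hedit | hedit
    · rcases prefix_or_exists_infix_of_levenshtein_le p t y hmatch with hp | ⟨r, hr, hry⟩
      · exact .inl (cons_prefix_cons.mpr ⟨rfl, hp⟩)
      · exact .inr ⟨r, hr, infix_cons hry⟩
    all_goals
      obtain ⟨q, t', ht⟩ := exists_cons_of_length_pos (by omega : 0 < t.length)
      simp only [ht, flatten_cons, length_cons, add_le_add_iff_right] at hedit
      rw [← append_assoc] at hedit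
    · exact .inr <| ht ▸ exists_infix_of_append_prefix_or (infix_refl _)
        (prefix_or_exists_infix_of_levenshtein_le (p ++ q) t' (b :: y) hedit)
    · exact .inr <| ht ▸ exists_infix_of_append_prefix_or (infix_cons (infix_refl y))
        (prefix_or_exists_infix_of_levenshtein_le (a :: p ++ q) t' y hedit)
    · exact .inr <| ht ▸ exists_infix_of_append_prefix_or (infix_cons (infix_refl y))
        (prefix_or_exists_infix_of_levenshtein_le (p ++ q) t' y hedit)
termination_by h t y => (h ++ t.flatten).length + y.length
decreasing_by all_goals subst_vars; simp only [flatten_cons, length_append, length_cons]; omega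

end

/-- If `ed(x,y) ≤ k` and `x` is partitioned into `k+1` consecutive pieces,
then some piece occurs as a contiguous substring (infix) of `y`. -/
theorem piece_infix_of_editDist_le {α : Type*} [DecidableEq α]
    (k : ℕ) (x y : List α)
    (hed : levenshtein Levenshtein.defaultCost x y ≤ k)
    (pieces : List (List α))
    (hlen : pieces.length = k + 1)
    (hjoin : pieces.flatten = x) :
    ∃ p ∈ pieces, p <:+: y := by
  obtain ⟨h, t, rfl⟩ := exists_cons_of_length_eq_add_one hlen
  rw [length_cons, Nat.add_right_cancel_iff] at hlen
  subst hjoin hlen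
  rcases prefix_or_exists_infix_of_levenshtein_le h t y hed with hh | ⟨p, hp, hpy⟩
  · exact ⟨h, mem_cons_self, hh.isInfix⟩
  · exact ⟨p, mem_cons_of_mem h hp, hpy⟩
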